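/- With notation as in the context (so n = 2m+1): (i) every element of B_{n+2} ∩ U(V_{n+1}) lies in B_n; and (ii) if η ∈ U(V_{n+1}) satisfies η B_n η^{−1} ∩ B_{n+1} = {1}, then B_{n+2} ∩ η^{−1} B_{n+1} η = {1}. -/
import Mathlib


noncomputable section

set_option maxHeartbeats 1000000

namespace GrossPrasadOdd

/-- The ambient hermitian space `W` (for `n = 2m+1`), realized as pairs of coordinate
vectors: `e i = (δ_i, 0)` and `f i = (0, δ_i)` for `i : Fin (m+2)`. -/
abbrev Amb (E : Type) [Field E] (m : ℕ) := (Fin (m + 2) → E) × (Fin (m + 2) → E)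

/-- The isotropic basis vector `e_i`. -/
def e (E : Type) [Field E] (m : ℕ) (i : Fin (m + 2)) : Amb E m := (Pi.single i 1, 0)

/-- The isotropic basis vector `f_i`. -/
def f (E : Type) [Field E] (m : ℕ) (i : Fin (m + 2)) : Amb E m := (0, Pi.single i 1)

/-- The index of `e_{m+1}` (`0`-based index `m`). -/
def i1 (m : ℕ) : Fin (m + 2) := ⟨m, by omega⟩

/-- The index of `e_{m+2}` (`0`-based index `m+1`). -/
def i2 (m : ℕ) : Fin (m + 2) := ⟨m + 1, by omega⟩

/-- The hermitian form with `h(e_i, e_j) = h(f_i, f_j) = 0` and `h(e_i, f_j) = δ_{ij}`;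
it is `τ`-sesquilinear and satisfies `h(y,x) = τ(h(x,y))` when `τ ∘ τ = id`. -/
def herm (E : Type) [Field E] (m : ℕ) (τ : E →+* E) (x y : Amb E m) : E :=
  (∑ k, x.1 k * τ (y.2 k)) + ∑ k, x.2 k * τ (y.1 k)

/-- `g` is an isometry of the hermitian form on the ambient space `W`. -/
def IsIsom (E : Type) [Field E] (m : ℕ) (τ : E →+* E)
    (g : Amb E m ≃ₗ[E] Amb E m) : Prop :=
  ∀ x y : Amb E m, herm E m τ (g x) (g y) = herm E m τ x y

/-- The isotropic subspace `⟨e_1, …, e_k⟩` (with `0`-based indexing `i < k`). -/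
def Ek (E : Type) [Field E] (m : ℕ) (k : ℕ) : Submodule E (Amb E m) :=
  Submodule.span E (e E m '' {i : Fin (m + 2) | (i : ℕ) < k})

/-- The subspace `V_n = ⟨e_1, …, e_m, f_1, …, f_m⟩ ⊕ E·(e_{m+1} + f_{m+1})`. -/
def Vn (E : Type) [Field E] (m : ℕ) : Submodule E (Amb E m) :=
  Submodule.span E
      (e E m '' {i : Fin (m + 2) | (i : ℕ) < m} ∪
        f E m '' {i : Fin (m + 2) | (i : ℕ) < m}) ⊔
    Submodule.span E {e E m (i1 m) + f E m (i1 m)}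

/-- The subspace `V_{n+1} = V_n ⊕ E·(e_{m+1} - f_{m+1})`. -/
def Vn1 (E : Type) [Field E] (m : ℕ) : Submodule E (Amb E m) :=
  Vn E m ⊔ Submodule.span E {e E m (i1 m) - f E m (i1 m)}

/-- The subspace `V_{n+2} = V_{n+1} ⊕ E·(e_{m+2} + f_{m+2})`. -/
def Vn2 (E : Type) [Field E] (m : ℕ) : Submodule E (Amb E m) :=
  Vn1 E m ⊔ Submodule.span E {e E m (i2 m) + f E m (i2 m)}

/-- The vector `v = e_{m+2} + f_{m+2} + e_{m+1} - f_{m+1}`. -/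
def vv (E : Type) [Field E] (m : ℕ) : Amb E m :=
  e E m (i2 m) + f E m (i2 m) + e E m (i1 m) - f E m (i1 m)

/-- The members of the flag `F_{n+1}`: `⟨e_{m+1}, e_1, …, e_k⟩` for `0 ≤ k ≤ m`. -/
def Fk1 (E : Type) [Field E] (m : ℕ) (k : ℕ) : Submodule E (Amb E m) :=
  Submodule.span E {e E m (i1 m)} ⊔ Ek E m k

/-- The members of the flag `F_{n+2}`: `⟨v, e_1, …, e_k⟩` for `0 ≤ k ≤ m`. -/
def Fk2 (E : Type) [Field E] (m : ℕ) (k : ℕ) : Submodule E (Amb E m) :=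
  Submodule.span E {vv E m} ⊔ Ek E m k

/-- Membership in `B_n`: an isometry lying in `U(V_n)` (it fixes the orthogonal
complement `⟨e_{m+1} - f_{m+1}, e_{m+2}, f_{m+2}⟩` pointwise and preserves `V_n`)
stabilizing the flag `F_n`. -/
def Bn (E : Type) [Field E] (m : ℕ) (τ : E →+* E) (g : Amb E m ≃ₗ[E] Amb E m) : Prop :=
  IsIsom E m τ g ∧
    g (e E m (i1 m) - f E m (i1 m)) = e E m (i1 m) - f E m (i1 m) ∧
    g (e E m (i2 m)) = e E m (i2 m) ∧
    g (f E m (i2 m)) = f E m (i2 m) ∧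
    (Vn E m).map g.toLinearMap = Vn E m ∧
    ∀ k : ℕ, 1 ≤ k → k ≤ m → (Ek E m k).map g.toLinearMap = Ek E m k

/-- Membership in `B_{n+1}`: an isometry lying in `U(V_{n+1})` (it fixes the orthogonal
complement `⟨e_{m+2}, f_{m+2}⟩` pointwise and preserves `V_{n+1}`) stabilizing the flag
`F_{n+1}`. -/
def Bn1 (E : Type) [Field E] (m : ℕ) (τ : E →+* E) (g : Amb E m ≃ₗ[E] Amb E m) : Prop :=
  IsIsom E m τ g ∧
    g (e E m (i2 m)) = e E m (i2 m) ∧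
    g (f E m (i2 m)) = f E m (i2 m) ∧
    (Vn1 E m).map g.toLinearMap = Vn1 E m ∧
    ∀ k : ℕ, k ≤ m → (Fk1 E m k).map g.toLinearMap = Fk1 E m k

/-- Membership in `B_{n+2}`: an isometry lying in `U(V_{n+2})` (it fixes
`e_{m+2} - f_{m+2}` and preserves `V_{n+2}`) stabilizing the flag `F_{n+2}`. -/
def Bn2 (E : Type) [Field E] (m : ℕ) (τ : E →+* E) (g : Amb E m ≃ₗ[E] Amb E m) : Prop :=
  IsIsom E m τ g ∧
    g (e E m (i2 m) - f E m (i2 m)) = e E m (i2 m) - f E m (i2 m) ∧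
    (Vn2 E m).map g.toLinearMap = Vn2 E m ∧
    ∀ k : ℕ, k ≤ m → (Fk2 E m k).map g.toLinearMap = Fk2 E m k

/-- Membership in `U(V_{n+1})` inside `U(W)`: an isometry mapping `V_{n+1}` to itself
and extending by the identity on the orthogonal complement `⟨e_{m+2}, f_{m+2}⟩`. -/
def MemUn1 (E : Type) [Field E] (m : ℕ) (τ : E →+* E)
    (g : Amb E m ≃ₗ[E] Amb E m) : Prop :=
  IsIsom E m τ g ∧ (∀ x ∈ Vn1 E m, g x ∈ Vn1 E m) ∧
    g (e E m (i2 m)) = e E m (i2 m) ∧ g (f E m (i2 m)) = f E m (i2 m)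

/-! ### Auxiliary machinery -/

section Aux

variable {E : Type} [Field E] {m : ℕ} {τ : E →+* E}

/-- The coordinate functional `x ↦ x.1 (i2 m)`. -/
def pii (E : Type) [Field E] (m : ℕ) : Amb E m →ₗ[E] E :=
  (LinearMap.proj (i2 m)).comp (LinearMap.fst E _ _)

/-- The functional `x ↦ x.2 (i1 m) - x.1 (i1 m)`, which equals `herm (·, e₁ - f₁)`. -/
def ell (E : Type) [Field E] (m : ℕ) : Amb E m →ₗ[E] E :=
  (LinearMap.proj (i1 m)).comp (LinearMap.snd E _ _) -
    (LinearMap.proj (i1 m)).comp (LinearMap.fst E _ _)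

@[simp] lemma pii_apply (x : Amb E m) : pii E m x = x.1 (i2 m) := rfl

@[simp] lemma ell_apply (x : Amb E m) : ell E m x = x.2 (i1 m) - x.1 (i1 m) := rfl

lemma i1_ne_i2 : i1 m ≠ i2 m := by
  simp only [i1, i2, ne_eq, Fin.mk.injEq]; omega

lemma ne_i1_of_lt {i : Fin (m + 2)} (hi : (i : ℕ) < m) : i1 m ≠ i := by
  simp only [i1, ne_eq, Fin.ext_iff]; omega

lemma ne_i2_of_lt {i : Fin (m + 2)} (hi : (i : ℕ) < m) : i2 m ≠ i := by
  simp only [i2, ne_eq, Fin.ext_iff]; omega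

lemma herm_ell (x : Amb E m) :
    herm E m τ x (e E m (i1 m) - f E m (i1 m)) = ell E m x := by
  simp [herm, e, f, Pi.single_apply, apply_ite τ, mul_ite,
    Finset.sum_ite_eq', sub_eq_add_neg, add_comm]

lemma Vn_le_Vn1 : Vn E m ≤ Vn1 E m := le_sup_left

lemma Vn1_le_ker_pii : Vn1 E m ≤ LinearMap.ker (pii E m) := by
  rw [Vn1, Vn]
  refine sup_le (sup_le (Submodule.span_le.2 ?_) (Submodule.span_le.2 ?_))
    (Submodule.span_le.2 ?_)
  · rintro x (⟨i, hi, rfl⟩ | ⟨i, hi, rfl⟩) <;>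
      simp [LinearMap.mem_ker, e, f, Pi.single_eq_of_ne (ne_i2_of_lt hi)]
  · rintro x rfl
    simp [LinearMap.mem_ker, e, f, Pi.single_eq_of_ne i1_ne_i2.symm]
  · rintro x rfl
    simp [LinearMap.mem_ker, e, f, Pi.single_eq_of_ne i1_ne_i2.symm]

lemma pii_vv : pii E m (vv E m) = 1 := by
  simp [vv, e, f, Pi.single_eq_of_ne i1_ne_i2.symm]

lemma pii_e2 : pii E m (e E m (i2 m)) = 1 := by simp [e]

lemma pii_f2 : pii E m (f E m (i2 m)) = 0 := by simp [f]

lemma Vn_le_ker_ell : Vn E m ≤ LinearMap.ker (ell E m) := by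
  rw [Vn]
  refine sup_le (Submodule.span_le.2 ?_) (Submodule.span_le.2 ?_)
  · rintro x (⟨i, hi, rfl⟩ | ⟨i, hi, rfl⟩) <;>
      simp [LinearMap.mem_ker, e, f, Pi.single_eq_of_ne (ne_i1_of_lt hi)]
  · rintro x rfl
    simp [LinearMap.mem_ker, e, f]

lemma ell_d : ell E m (e E m (i1 m) - f E m (i1 m)) = -2 := by
  simp [e, f]; ring

lemma Ek_le_Vn {k : ℕ} (hk : k ≤ m) : Ek E m k ≤ Vn E m := by
  rw [Ek, Vn]
  refine Submodule.span_le.2 ?_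
  rintro x ⟨i, hi, rfl⟩
  exact Submodule.mem_sup_left
    (Submodule.subset_span (Or.inl ⟨i, lt_of_lt_of_le hi hk, rfl⟩))

lemma Ek_zero : Ek E m 0 = ⊥ := by
  have h : {i : Fin (m + 2) | (i : ℕ) < 0} = ∅ := by ext i; simp
  rw [Ek, h, Set.image_empty, Submodule.span_empty]

lemma Fk2_inf {k : ℕ} (hk : k ≤ m) : Fk2 E m k ⊓ Vn1 E m = Ek E m k := by
  refine le_antisymm ?_ (le_inf le_sup_right ((Ek_le_Vn hk).trans Vn_le_Vn1))
  rintro x hx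
  obtain ⟨hx1, hx2⟩ := Submodule.mem_inf.1 hx
  obtain ⟨y, hy, z, hz, rfl⟩ := Submodule.mem_sup.1 hx1
  obtain ⟨a, rfl⟩ := Submodule.mem_span_singleton.1 hy
  have hz1 : pii E m z = 0 :=
    LinearMap.mem_ker.1 (Vn1_le_ker_pii (Vn_le_Vn1 (Ek_le_Vn hk hz)))
  have hx2' : pii E m (a • vv E m + z) = 0 := LinearMap.mem_ker.1 (Vn1_le_ker_pii hx2)
  rw [map_add, map_smul, pii_vv, hz1, smul_eq_mul, mul_one, add_zero] at hx2'
  rw [hx2', zero_smul, zero_add]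
  exact hz

lemma Vn_eq_inf (h2 : (2 : E) ≠ 0) :
    Vn1 E m ⊓ LinearMap.ker (ell E m) = Vn E m := by
  refine le_antisymm ?_ (le_inf Vn_le_Vn1 Vn_le_ker_ell)
  rintro x hx
  obtain ⟨hx1, hx2⟩ := Submodule.mem_inf.1 hx
  rw [Vn1] at hx1
  obtain ⟨y, hy, z, hz, rfl⟩ := Submodule.mem_sup.1 hx1
  obtain ⟨t, rfl⟩ := Submodule.mem_span_singleton.1 hz
  have hy0 : ell E m y = 0 := LinearMap.mem_ker.1 (Vn_le_ker_ell hy)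
  have h0 : ell E m (y + t • (e E m (i1 m) - f E m (i1 m))) = 0 :=
    LinearMap.mem_ker.1 hx2
  rw [map_add, map_smul, hy0, ell_d, zero_add, smul_eq_mul] at h0
  have ht : t = 0 := by
    rcases mul_eq_zero.1 h0 with h | h
    · exact h
    · exact absurd h (by simpa using h2)
  rw [ht, zero_smul, add_zero]
  exact hy

lemma map_eq_of_mapsTo (g : Amb E m ≃ₗ[E] Amb E m) (p : Submodule E (Amb E m))
    (h : ∀ x ∈ p, g x ∈ p) : p.map g.toLinearMap = p := by
  have h1 : p.map g.toLinearMap ≤ p := by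
    rintro _ ⟨x, hx, rfl⟩; exact h x hx
  exact Submodule.eq_of_le_of_finrank_le h1 (LinearEquiv.finrank_map_eq g p).ge

lemma map_ker_ell (g : Amb E m ≃ₗ[E] Amb E m) (hiso : IsIsom E m τ g)
    (hd : g (e E m (i1 m) - f E m (i1 m)) = e E m (i1 m) - f E m (i1 m)) :
    (LinearMap.ker (ell E m)).map g.toLinearMap = LinearMap.ker (ell E m) := by
  have key : ∀ x : Amb E m, ell E m (g x) = ell E m x := by
    intro x
    calc ell E m (g x) = herm E m τ (g x) (e E m (i1 m) - f E m (i1 m)) :=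
          (herm_ell _).symm
      _ = herm E m τ (g x) (g (e E m (i1 m) - f E m (i1 m))) := by rw [hd]
      _ = herm E m τ x (e E m (i1 m) - f E m (i1 m)) := hiso _ _
      _ = ell E m x := herm_ell _
  refine le_antisymm ?_ ?_
  · rintro _ ⟨x, hx, rfl⟩
    have hx0 : ell E m x = 0 := hx
    exact LinearMap.mem_ker.2
      (by rw [show g.toLinearMap x = g x from rfl, key, hx0])
  · intro x hx
    have hx0 : ell E m x = 0 := hx
    refine ⟨g.symm x, LinearMap.mem_ker.2 ?_, g.apply_symm_apply x⟩
    rw [← key, g.apply_symm_apply, hx0]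

lemma part_one (h2 : (2 : E) ≠ 0) (g : Amb E m ≃ₗ[E] Amb E m)
    (hg : Bn2 E m τ g) (hu : MemUn1 E m τ g) : Bn E m τ g := by
  obtain ⟨hiso, _hfix, _hV2, hflag⟩ := hg
  obtain ⟨_, hV1, he2, hf2⟩ := hu
  have hdmem : e E m (i1 m) - f E m (i1 m) ∈ Vn1 E m :=
    Submodule.mem_sup_right (Submodule.subset_span rfl)
  have hF0 : (Fk2 E m 0).map g.toLinearMap = Fk2 E m 0 := hflag 0 (Nat.zero_le m)
  have hvmem : vv E m ∈ Fk2 E m 0 :=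
    Submodule.mem_sup_left (Submodule.subset_span rfl)
  have hgv : g (vv E m) ∈ Fk2 E m 0 := by
    rw [← hF0]; exact ⟨_, hvmem, rfl⟩
  have hgv' : g (vv E m) ∈ Submodule.span E {vv E m} := by
    rwa [Fk2, Ek_zero, sup_bot_eq] at hgv
  obtain ⟨c, hc⟩ := Submodule.mem_span_singleton.1 hgv'
  have hvdecomp : vv E m =
      (e E m (i2 m) + f E m (i2 m)) + (e E m (i1 m) - f E m (i1 m)) := by
    rw [vv]; abel
  have h1 : c • vv E m =
      (e E m (i2 m) + f E m (i2 m)) + g (e E m (i1 m) - f E m (i1 m)) := by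
    rw [hc, hvdecomp, map_add, map_add, he2, hf2]
  have hgd : g (e E m (i1 m) - f E m (i1 m)) =
      c • vv E m - (e E m (i2 m) + f E m (i2 m)) :=
    eq_sub_of_add_eq' h1.symm
  have hpgd : pii E m (g (e E m (i1 m) - f E m (i1 m))) = 0 :=
    LinearMap.mem_ker.1 (Vn1_le_ker_pii (hV1 _ hdmem))
  have hc1 : c = 1 := by
    rw [hgd, map_sub, map_smul, map_add, pii_vv, pii_e2, pii_f2, smul_eq_mul,
      mul_one, add_zero] at hpgd
    exact sub_eq_zero.1 hpgd
  have hgd' : g (e E m (i1 m) - f E m (i1 m)) = e E m (i1 m) - f E m (i1 m) := by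
    rw [hgd, hc1, one_smul, hvdecomp]; abel
  have hVn1map : (Vn1 E m).map g.toLinearMap = Vn1 E m := map_eq_of_mapsTo g _ hV1
  have hinj : Function.Injective g.toLinearMap := g.injective
  have hEk : ∀ k : ℕ, 1 ≤ k → k ≤ m →
      (Ek E m k).map g.toLinearMap = Ek E m k := by
    intro k _ hk
    rw [← Fk2_inf hk, Submodule.map_inf _ hinj, hflag k hk, hVn1map, Fk2_inf hk]
  have hVn : (Vn E m).map g.toLinearMap = Vn E m := by
    rw [← Vn_eq_inf h2, Submodule.map_inf _ hinj, hVn1map,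
      map_ker_ell g hiso hgd', Vn_eq_inf h2]
  exact ⟨hiso, hgd', he2, hf2, hVn, hEk⟩

lemma memUn1_mul {a b : Amb E m ≃ₗ[E] Amb E m} (ha : MemUn1 E m τ a)
    (hb : MemUn1 E m τ b) : MemUn1 E m τ (a * b) := by
  obtain ⟨hai, haV, hae, haf⟩ := ha
  obtain ⟨hbi, hbV, hbe, hbf⟩ := hb
  refine ⟨fun x y => ?_, fun x hx => ?_, ?_, ?_⟩
  · exact (hai (b x) (b y)).trans (hbi x y)
  · exact haV _ (hbV x hx)
  · show a (b (e E m (i2 m))) = e E m (i2 m); rw [hbe, hae]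
  · show a (b (f E m (i2 m))) = f E m (i2 m); rw [hbf, haf]

lemma memUn1_inv {a : Amb E m ≃ₗ[E] Amb E m} (ha : MemUn1 E m τ a) :
    MemUn1 E m τ a⁻¹ := by
  obtain ⟨hai, haV, hae, haf⟩ := ha
  have hmap := map_eq_of_mapsTo a _ haV
  refine ⟨fun x y => ?_, fun x hx => ?_, ?_, ?_⟩
  · have := hai (a⁻¹ x) (a⁻¹ y)
    rw [show a (a⁻¹ x) = x from a.apply_symm_apply x,
      show a (a⁻¹ y) = y from a.apply_symm_apply y] at this
    exact this.symm
  · rw [← hmap] at hx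
    obtain ⟨y, hy, hyx⟩ := hx
    have : (a⁻¹ : Amb E m ≃ₗ[E] Amb E m) x = y := by
      rw [← hyx]; exact a.symm_apply_apply y
    rwa [this]
  · exact (LinearEquiv.symm_apply_eq a).2 hae.symm
  · exact (LinearEquiv.symm_apply_eq a).2 haf.symm

lemma bn1_memUn1 {c : Amb E m ≃ₗ[E] Amb E m} (h : Bn1 E m τ c) :
    MemUn1 E m τ c := by
  obtain ⟨hi, he, hf, hV, _⟩ := h
  exact ⟨hi, fun x hx => by rw [← hV]; exact ⟨x, hx, rfl⟩, he, hf⟩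

end Aux

/-- The odd case (`n = 2m+1`) of the paper's Proposition 2.3:
(i) `B_{n+2} ∩ U(V_{n+1}) ⊆ B_n`; and (ii) if `η ∈ U(V_{n+1})` satisfies
`η B_n η⁻¹ ∩ B_{n+1} = {1}`, then `B_{n+2} ∩ η⁻¹ B_{n+1} η = {1}`. -/
theorem stmt2 (E : Type) [Field E] (h2 : (2 : E) ≠ 0) (τ : E →+* E)
    (hτ : ∀ x : E, τ (τ x) = x) (m : ℕ) (hm : 1 ≤ m) :
    (∀ g : Amb E m ≃ₗ[E] Amb E m, Bn2 E m τ g → MemUn1 E m τ g → Bn E m τ g) ∧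
    (∀ η : Amb E m ≃ₗ[E] Amb E m, MemUn1 E m τ η →
      (∀ b : Amb E m ≃ₗ[E] Amb E m, Bn E m τ b → Bn1 E m τ (η * b * η⁻¹) → b = 1) →
      ∀ g : Amb E m ≃ₗ[E] Amb E m, Bn2 E m τ g → Bn1 E m τ (η * g * η⁻¹) → g = 1) := by
  constructor
  · exact fun g hg hu => part_one h2 g hg hu
  · intro η hη hcond g hg2 hconj
    have hc : MemUn1 E m τ (η * g * η⁻¹) := bn1_memUn1 hconj
    have hgU : MemUn1 E m τ g := by
      have hgr : g = η⁻¹ * (η * g * η⁻¹) * η := by group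
      rw [hgr]
      exact memUn1_mul (memUn1_mul (memUn1_inv hη) hc) hη
    exact hcond g (part_one h2 g hg2 hgU) hconj

end GrossPrasadOdd
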